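/- Let P ⊆ nA* be a finite maximal joinless code with P ≠ {(ε)^n}, and let v = (v_1,…,v_n) be a leaf of the interior dag of P, with v_+ = {v·a : a ∈ A_{ε,n}} ∩ P. Then v_+ is nonempty, and there is a unique index i ∈ {1,…,n} such that v_+ ⊆ {(v_1,…,v_{i−1}, v_i a, v_{i+1},…,v_n) : a ∈ A}. -/

import Mathlib

namespace BrinThompson

abbrev W (A : Type*) (n : ℕ) : Type _ := Fin n → List A

variable {A : Type*} {n : ℕ}

/-- Coordinatewise concatenation in `nA*`. -/
def cat (u x : W A n) : W A n := fun i => u i ++ x i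

/-- `u ≤_init v` : `u` is an initial factor of `v`. -/
def initLE (u v : W A n) : Prop := ∃ x : W A n, v = cat u x

/-- `w` is the join (least upper bound) of `u` and `v` w.r.t. `≤_init`. -/
def isJoin (u v w : W A n) : Prop :=
  initLE u w ∧ initLE v w ∧ ∀ z : W A n, initLE u z → initLE v z → initLE w z

/-- `u` and `v` have a join. -/
def HasJoin (u v : W A n) : Prop := ∃ w : W A n, isJoin u v w

/-- A joinless code: no two distinct elements have a join. -/
def JoinlessCode (S : Set (W A n)) : Prop :=
  ∀ u ∈ S, ∀ v ∈ S, u ≠ v → ¬ HasJoin u v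

/-- A maximal joinless code: joinless, and every element of `nA*` has a join
with some element of the code. -/
def MaxJoinlessCode (S : Set (W A n)) : Prop :=
  JoinlessCode S ∧ ∀ x : W A n, ∃ p ∈ S, HasJoin x p

/-- The right ideal `C · nA*` generated by `C`. -/
def genIdeal (C : Set (W A n)) : Set (W A n) := {w | ∃ c ∈ C, ∃ x : W A n, w = cat c x}

def IsRightIdeal (R : Set (W A n)) : Prop := genIdeal R = R

/-- An initial factor code: pairwise `≤_init`-incomparable set. -/
def InitFactorCode (S : Set (W A n)) : Prop :=
  ∀ u ∈ S, ∀ v ∈ S, initLE u v → u = v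

/-- `A_{ε,n}`: tuples with one coordinate a single letter and the rest empty. -/
def Aeps (A : Type*) (n : ℕ) : Set (W A n) :=
  {w | ∃ i : Fin n, ∃ a : A, w i = [a] ∧ ∀ j : Fin n, j ≠ i → w j = []}

/-- `(ε)^n`, the tuple of empty strings. -/
def epsn (A : Type*) (n : ℕ) : W A n := fun _ => []

/-- `nA^ω`: `n`-tuples of one-sided infinite sequences over `A`. -/
abbrev Winf (A : Type*) (n : ℕ) : Type _ := Fin n → ℕ → A

/-- Concatenation of a finite tuple `p ∈ nA*` with an infinite tuple `u ∈ nA^ω`. -/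
def catInf (p : W A n) (u : Winf A n) : Winf A n :=
  fun i k => if h : k < (p i).length then (p i).get ⟨k, h⟩ else u i (k - (p i).length)

/-- `v` is an interior vertex of the `P`-dag: a strict initial factor of
some element of `P`. -/
def Interior (P : Set (W A n)) (v : W A n) : Prop := ∃ p ∈ P, initLE v p ∧ v ≠ p

/-- The child of `v` in direction `i`, extended by letter `a`. -/
def child (v : W A n) (i : Fin n) (a : A) : W A n := Function.update v i (v i ++ [a])

/-- A leaf of the interior dag of `P`: an interior vertex none of whose
children is interior. -/
def InteriorLeaf (P : Set (W A n)) (v : W A n) : Prop :=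
  Interior P v ∧ ∀ (i : Fin n) (a : A), ¬ Interior P (child v i a)

/-- `v_+ = (v · A_{ε,n}) ∩ P`, the set of children of `v` belonging to `P`. -/
def vplus (P : Set (W A n)) (v : W A n) : Set (W A n) :=
  {w | (∃ (i : Fin n) (a : A), w = child v i a) ∧ w ∈ P}

/-- The depth of a vertex: the sum of the coordinate lengths. -/
def depth (v : W A n) : ℕ := ∑ i, (v i).length

/-- One-step restriction of `P` at `(p, i)`. -/
def oneStep (P : Set (W A n)) (p : W A n) (i : Fin n) : Set (W A n) :=
  (P \ {p}) ∪ {w | ∃ a : A, w = child p i a}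

/-- One step in a sequence of one-step restrictions. -/
def RestrStep (P Q : Set (W A n)) : Prop := ∃ p ∈ P, ∃ i : Fin n, Q = oneStep P p i

/-- The box code `A^{k_1} × … × A^{k_n}`. -/
def box (A : Type*) {n : ℕ} (k : Fin n → ℕ) : Set (W A n) :=
  {w | ∀ i : Fin n, (w i).length = k i}

/-- Elementwise join `P ∨ Q` of two sets, ranging over the joins that exist. -/
def setJoin (P Q : Set (W A n)) : Set (W A n) :=
  {w | ∃ p ∈ P, ∃ q ∈ Q, isJoin p q w}

/-- `ℓ(S)`: the maximum coordinate length occurring in `S`. -/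
noncomputable def ell (S : Set (W A n)) : ℕ :=
  sSup {m | ∃ z ∈ S, ∃ i : Fin n, (z i).length = m}

/-- An element of `n RI^fin_A`: an injective right ideal morphism of `nA*`
whose domain code and image code are finite maximal joinless codes.
`toFun` is a total function whose values outside `Dom` are irrelevant. -/
structure RIMfin (A : Type*) (n : ℕ) where
  Dom : Set (W A n)
  toFun : W A n → W A n
  domC : Set (W A n)
  imC : Set (W A n)
  ideal : IsRightIdeal Dom
  morph : ∀ x ∈ Dom, ∀ w : W A n, toFun (cat x w) = cat (toFun x) w
  inj : Set.InjOn toFun Dom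
  domC_gen : genIdeal domC = Dom
  imC_gen : genIdeal imC = toFun '' Dom
  domC_fin : domC.Finite
  domC_max : MaxJoinlessCode domC
  imC_fin : imC.Finite
  imC_max : MaxJoinlessCode imC

/-- `ℓ(f) = max{ℓ(z) : z ∈ domC(f) ∪ imC(f)}`. -/
noncomputable def ellF (F : RIMfin A n) : ℕ := ell (F.domC ∪ F.imC)

/-- `G` extends `F` (as partial functions). -/
def Extends (F G : RIMfin A n) : Prop :=
  F.Dom ⊆ G.Dom ∧ ∀ x ∈ F.Dom, G.toFun x = F.toFun x

/-- `F` and `G` are equal as partial functions. -/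
def EquivRIM (F G : RIMfin A n) : Prop :=
  F.Dom = G.Dom ∧ ∀ x ∈ F.Dom, F.toFun x = G.toFun x

/-- `G` is a maximal extension of `F` in `n RI^fin_A`. -/
def MaxExtension (F G : RIMfin A n) : Prop :=
  Extends F G ∧ ∀ H : RIMfin A n, Extends G H → EquivRIM G H

/-!
A leaf `v` lies strictly below some `p ∈ P`, so some child `v·a` of `v` is still an initial
factor of `p`; as `v·a` is not interior, `v·a = p ∈ P`. Two children of `v` in different
directions are coordinatewise comparable and hence have a join, so joinlessness forces every
element of `v_+` to lie in the direction of that child.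
-/

lemma initLE_iff {u v : W A n} : initLE u v ↔ ∀ i, u i <+: v i := by
  constructor
  · rintro ⟨x, rfl⟩ i
    exact List.prefix_append _ _
  · intro h
    refine ⟨fun i => (v i).drop (u i).length, funext fun i => ?_⟩
    obtain ⟨t, ht⟩ := h i
    simp [cat, ← ht]

lemma hasJoin_of_forall_prefix_or_prefix {u v : W A n}
    (h : ∀ i, u i <+: v i ∨ v i <+: u i) : HasJoin u v := by
  classical
  refine ⟨fun i => if u i <+: v i then v i else u i, ?_, ?_, ?_⟩ <;>
    simp only [initLE_iff] <;> intro i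
  · split_ifs with hi
    exacts [hi, List.prefix_refl _]
  · split_ifs with hi
    exacts [List.prefix_refl _, (h i).resolve_left hi]
  · intro hu hv i
    split_ifs
    exacts [hv i, hu i]

lemma child_apply_self (v : W A n) (i : Fin n) (a : A) : child v i a i = v i ++ [a] := by
  simp [child]

lemma child_apply_of_ne (v : W A n) {i j : Fin n} (a : A) (h : j ≠ i) :
    child v i a j = v j :=
  Function.update_of_ne h _ _

lemma eq_of_child_eq_child {v : W A n} {i j : Fin n} {a b : A}
    (h : child v i a = child v j b) : i = j := by
  by_contra hij
  have hi := congrArg List.length (congrFun h i)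
  rw [child_apply_self, child_apply_of_ne v b hij] at hi
  simp at hi

lemma hasJoin_child_child {v : W A n} {i j : Fin n} (a b : A) (hij : i ≠ j) :
    HasJoin (child v i a) (child v j b) := by
  refine hasJoin_of_forall_prefix_or_prefix fun k => ?_
  by_cases hki : k = i
  · subst hki
    rw [child_apply_self, child_apply_of_ne v b hij]
    exact .inr (List.prefix_append _ _)
  · rw [child_apply_of_ne v a hki]
    by_cases hkj : k = j
    · subst hkj
      rw [child_apply_self]
      exact .inl (List.prefix_append _ _)
    · rw [child_apply_of_ne v b hkj]
      exact .inl (List.prefix_refl _)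

lemma exists_child_initLE {v p : W A n} (hvp : initLE v p) (hne : v ≠ p) :
    ∃ i a, initLE (child v i a) p := by
  obtain ⟨x, rfl⟩ := hvp
  obtain ⟨i, hi⟩ : ∃ i, x i ≠ [] := by
    by_contra! h
    exact hne (funext fun i => by simp [cat, h i])
  obtain ⟨a, t, hx⟩ := List.exists_cons_of_ne_nil hi
  refine ⟨i, a, initLE_iff.2 fun j => ?_⟩
  by_cases hj : j = i
  · subst hj
    rw [child_apply_self]
    exact ⟨t, by simp [cat, hx]⟩
  · rw [child_apply_of_ne v a hj]
    exact List.prefix_append _ _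

lemma InteriorLeaf.exists_child_mem {P : Set (W A n)} {v : W A n} (hv : InteriorLeaf P v) :
    ∃ i a, child v i a ∈ P := by
  obtain ⟨⟨p, hpP, hvp, hne⟩, hleaf⟩ := hv
  obtain ⟨i, a, hcp⟩ := exists_child_initLE hvp hne
  have hcp_eq : child v i a = p := by
    by_contra h
    exact hleaf i a ⟨p, hpP, hcp, h⟩
  exact ⟨i, a, hcp_eq ▸ hpP⟩

lemma JoinlessCode.eq_of_child_mem_of_child_mem {P : Set (W A n)} (hP : JoinlessCode P)
    {v : W A n} {i j : Fin n} {a b : A} (ha : child v i a ∈ P) (hb : child v j b ∈ P) :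
    i = j := by
  by_contra hij
  exact hP _ ha _ hb (fun h => hij (eq_of_child_eq_child h)) (hasJoin_child_child a b hij)

theorem interiorLeaf_children_general {A : Type*} {n : ℕ}
    (P : Set (W A n))
    (hmax : MaxJoinlessCode P)
    (v : W A n) (hv : InteriorLeaf P v) :
    (vplus P v).Nonempty ∧
    ∃! i : Fin n, vplus P v ⊆ {w | ∃ a : A, w = child v i a} := by
  obtain ⟨i, a, hia⟩ := hv.exists_child_mem
  have hmem : child v i a ∈ vplus P v := ⟨⟨i, a, rfl⟩, hia⟩
  refine ⟨⟨_, hmem⟩, i, ?_, fun j hj => ?_⟩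
  · rintro _ ⟨⟨j, b, rfl⟩, hjb⟩
    exact ⟨b, by rw [hmax.1.eq_of_child_mem_of_child_mem hia hjb]⟩
  · obtain ⟨b, hb⟩ := hj hmem
    exact (eq_of_child_eq_child hb).symm

/-- For a finite maximal joinless code `P ≠ {(ε)^n}` and any leaf `v` of the
interior dag of `P`, the set `v_+` is nonempty and is contained in the set of
children of `v` in a unique direction `i`. -/
theorem interiorLeaf_children {A : Type*} [Fintype A] [Nonempty A] {n : ℕ}
    (hn : 1 ≤ n) (P : Set (W A n)) (hfin : P.Finite)
    (hmax : MaxJoinlessCode P) (hne : P ≠ {epsn A n})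
    (v : W A n) (hv : InteriorLeaf P v) :
    (vplus P v).Nonempty ∧
    ∃! i : Fin n, vplus P v ⊆ {w | ∃ a : A, w = child v i a} :=
  interiorLeaf_children_general P hmax v hv

end BrinThompson
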